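/- Let U ⊂ ℝ^d ∖ {0} be open, γ : ℝ → ℝ^d a C^N curve, and σ : U → ℝ differentiable, such that ⟨γ^{(N−1)}(σ(ξ)), ξ⟩ = 0 for all ξ ∈ U. Suppose moreover that |⟨γ^{(N)}(σ(ξ)), ξ⟩| ≥ c|ξ| and |γ^{(N−1)}(σ(ξ))| ≤ M for all ξ ∈ U, where c > 0. Then |∇σ(ξ)| ≤ M/(c|ξ|) for all ξ ∈ U. -/

import Mathlib

/-! Differentiating `⟪γ^(N-1) (σ ξ), ξ⟫ = 0` gives
`⟪γ^(N) (σ ξ), ξ⟫ • ∇σ ξ + γ^(N-1) (σ ξ) = 0`; taking norms, the lower bound on the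
coefficient and the upper bound on `γ^(N-1)` give the estimate. -/

open scoped RealInnerProductSpace

open Filter Topology

theorem ContDiff.hasDerivAt_iteratedDeriv {𝕜 F : Type*} [NontriviallyNormedField 𝕜]
    [NormedAddCommGroup F] [NormedSpace 𝕜 F] {f : 𝕜 → F} {n : ℕ}
    (hf : ContDiff 𝕜 (n + 1) f) (x : 𝕜) :
    HasDerivAt (iteratedDeriv n f) (iteratedDeriv (n + 1) f x) x := by
  rw [iteratedDeriv_succ]
  exact ((hf.differentiable_iteratedDeriv' n) x).hasDerivAt

section InnerProductSpace

variable {E : Type*} [NormedAddCommGroup E] [InnerProductSpace ℝ E] [CompleteSpace E]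

theorem inner_smul_gradient_add_eq_zero {g : ℝ → E} {σ : E → ℝ} {ξ A : E}
    (hzero : ∀ᶠ x in 𝓝 ξ, ⟪g (σ x), x⟫ = 0) (hg : HasDerivAt g A (σ ξ))
    (hσ : DifferentiableAt ℝ σ ξ) :
    ⟪A, ξ⟫ • gradient σ ξ + g (σ ξ) = 0 := by
  have hderiv := (hg.hasFDerivAt.comp ξ hσ.hasFDerivAt).inner ℝ (hasFDerivAt_id ξ)
  have hconst := hderiv.unique ((hasFDerivAt_const (0 : ℝ) ξ).congr_of_eventuallyEq hzero)
  refine ext_inner_right ℝ fun v => ?_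
  have hv := congrArg (fun L : E →L[ℝ] ℝ => L v) hconst
  simp only [ContinuousLinearMap.comp_apply, fderivInnerCLM_apply,
    ContinuousLinearMap.prod_apply, ContinuousLinearMap.toSpanSingleton_apply,
    ContinuousLinearMap.id_apply, zero_apply, Function.comp_apply, id,
    real_inner_smul_left] at hv
  rw [inner_add_left, real_inner_smul_left, gradient, InnerProductSpace.toDual_symm_apply,
    inner_zero_left]
  linear_combination hv

end InnerProductSpace

theorem norm_le_div_of_smul_add_eq_zero {F : Type*} [NormedAddCommGroup F] [NormedSpace ℝ F]
    {a r M : ℝ} {G B : F} (hr : 0 < r) (hra : r ≤ |a|) (hB : ‖B‖ ≤ M)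
    (h : a • G + B = 0) : ‖G‖ ≤ M / r := by
  have ha : 0 < |a| := hr.trans_le hra
  have hnorm : |a| * ‖G‖ = ‖B‖ := by
    rw [← Real.norm_eq_abs, ← norm_smul, eq_neg_of_add_eq_zero_left h, norm_neg]
  calc ‖G‖ = ‖B‖ / |a| := by rw [← hnorm, mul_div_cancel_left₀ _ ha.ne']
    _ ≤ M / |a| := by gcongr
    _ ≤ M / r := div_le_div_of_nonneg_left ((norm_nonneg B).trans hB) hr hra

theorem stmt13_general {d N : ℕ} (hN : 2 ≤ N)
    (U : Set (EuclideanSpace ℝ (Fin d))) (hU : IsOpen U)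
    (hU0 : (0 : EuclideanSpace ℝ (Fin d)) ∉ U)
    (γ : ℝ → EuclideanSpace ℝ (Fin d)) (hγ : ContDiff ℝ N γ)
    (σ : EuclideanSpace ℝ (Fin d) → ℝ) (hσ : ∀ ξ ∈ U, DifferentiableAt ℝ σ ξ)
    (c M : ℝ) (hc : 0 < c)
    (hzero : ∀ ξ ∈ U, ⟪iteratedDeriv (N - 1) γ (σ ξ), ξ⟫ = 0)
    (hlow : ∀ ξ ∈ U, c * ‖ξ‖ ≤ |⟪iteratedDeriv N γ (σ ξ), ξ⟫|)
    (hbd : ∀ ξ ∈ U, ‖iteratedDeriv (N - 1) γ (σ ξ)‖ ≤ M) :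
    ∀ ξ ∈ U, ‖gradient σ ξ‖ ≤ M / (c * ‖ξ‖) := by
  intro ξ hξ
  have hξ_pos : 0 < ‖ξ‖ := norm_pos_iff.mpr (ne_of_mem_of_not_mem hξ hU0)
  obtain ⟨n, rfl⟩ : ∃ n, N = n + 1 := ⟨N - 1, by omega⟩
  rw [Nat.add_sub_cancel] at hzero hbd
  have hγ' : ContDiff ℝ (n + 1) γ := mod_cast hγ
  refine norm_le_div_of_smul_add_eq_zero (mul_pos hc hξ_pos) (hlow ξ hξ) (hbd ξ hξ)
    (inner_smul_gradient_add_eq_zero ?_ (hγ'.hasDerivAt_iteratedDeriv _) (hσ ξ hξ))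
  exact eventually_of_mem (hU.mem_nhds hξ) hzero

theorem stmt13 {d N : ℕ} (hd : 1 ≤ d) (hN : 2 ≤ N)
    (U : Set (EuclideanSpace ℝ (Fin d))) (hU : IsOpen U)
    (hU0 : (0 : EuclideanSpace ℝ (Fin d)) ∉ U)
    (γ : ℝ → EuclideanSpace ℝ (Fin d)) (hγ : ContDiff ℝ N γ)
    (σ : EuclideanSpace ℝ (Fin d) → ℝ) (hσ : ∀ ξ ∈ U, DifferentiableAt ℝ σ ξ)
    (c M : ℝ) (hc : 0 < c) (hM : 0 ≤ M)
    (hzero : ∀ ξ ∈ U, ⟪iteratedDeriv (N - 1) γ (σ ξ), ξ⟫ = 0)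
    (hlow : ∀ ξ ∈ U, c * ‖ξ‖ ≤ |⟪iteratedDeriv N γ (σ ξ), ξ⟫|)
    (hbd : ∀ ξ ∈ U, ‖iteratedDeriv (N - 1) γ (σ ξ)‖ ≤ M) :
    ∀ ξ ∈ U, ‖gradient σ ξ‖ ≤ M / (c * ‖ξ‖) :=
  stmt13_general hN U hU hU0 γ hγ σ hσ c M hc hzero hlow hbd
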